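/- Let r be a nonzero integer and let μ : H_r → Γ_r be the injective homomorphism with μ(g₁) = ((1,0),0), μ(g₂) = ((0,1),0), μ(g₃) = ((0,0),1). Then an element ((l₁,l₂), λ) ∈ Γ_r lies in the image of μ if and only if λ − (r/2) l₁ l₂ ∈ ℤ. -/

import Mathlib

/-- `ℤ[r/2]`: the additive subgroup of `ℚ` generated by `1` and `r/2`;
it equals `ℤ` if `r` is even and `(1/2)ℤ` if `r` is odd. -/
def Zr (r : ℤ) : AddSubgroup ℚ := AddSubgroup.closure {1, (r : ℚ) / 2}

lemma intCast_mem_Zr (r n : ℤ) : (n : ℚ) ∈ Zr r := by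
  have h1 : (1 : ℚ) ∈ Zr r := AddSubgroup.subset_closure (by simp)
  simpa using AddSubgroup.zsmul_mem _ h1 n

lemma half_mul_intCast_mem_Zr (r n : ℤ) : (r : ℚ) / 2 * (n : ℚ) ∈ Zr r := by
  have h1 : (r : ℚ) / 2 ∈ Zr r := AddSubgroup.subset_closure (by simp)
  have := AddSubgroup.zsmul_mem _ h1 n
  simpa [zsmul_eq_mul, mul_comm] using this

/-- The group `Γ_r`, with underlying set `ℤ² × ℤ[r/2]` and multiplication
`(ζ, y)(ζ', y') = (ζ + ζ', y + y' + (r/2) det(ζ, ζ'))`. -/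
@[ext]
structure GammaR (r : ℤ) where
  zeta : Fin 2 → ℤ
  y : ℚ
  hy : y ∈ Zr r

namespace GammaR

variable {r : ℤ}

instance : Mul (GammaR r) :=
  ⟨fun a b =>
    ⟨a.zeta + b.zeta,
     a.y + b.y + (r : ℚ) / 2 * ((a.zeta 0 * b.zeta 1 - a.zeta 1 * b.zeta 0 : ℤ) : ℚ),
     add_mem (add_mem a.hy b.hy) (half_mul_intCast_mem_Zr r _)⟩⟩

instance : One (GammaR r) := ⟨⟨0, 0, zero_mem _⟩⟩

instance : Inv (GammaR r) := ⟨fun a => ⟨-a.zeta, -a.y, neg_mem a.hy⟩⟩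

@[simp] lemma mul_zeta (a b : GammaR r) : (a * b).zeta = a.zeta + b.zeta := rfl
@[simp] lemma mul_y (a b : GammaR r) :
    (a * b).y = a.y + b.y + (r : ℚ) / 2 *
      ((a.zeta 0 * b.zeta 1 - a.zeta 1 * b.zeta 0 : ℤ) : ℚ) := rfl
@[simp] lemma one_zeta : (1 : GammaR r).zeta = 0 := rfl
@[simp] lemma one_y : (1 : GammaR r).y = 0 := rfl
@[simp] lemma inv_zeta (a : GammaR r) : a⁻¹.zeta = -a.zeta := rfl
@[simp] lemma inv_y (a : GammaR r) : a⁻¹.y = -a.y := rfl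

instance : Group (GammaR r) where
  mul_assoc a b c := by
    ext
    · simp [add_assoc]
    · simp only [mul_y, mul_zeta, Pi.add_apply]
      push_cast
      ring
  one_mul a := by ext <;> simp
  mul_one a := by ext <;> simp
  inv_mul_cancel a := by
    ext
    · simp
    · simp only [mul_y, inv_y, inv_zeta, Pi.neg_apply, one_y]
      push_cast
      ring

/-- The element `((l₁,l₂), l₃ + l₁l₂r/2)` of `Γ_r`. -/
def elt (r l1 l2 l3 : ℤ) : GammaR r :=
  ⟨![l1, l2], (l3 : ℚ) + (l1 : ℚ) * (l2 : ℚ) * (r : ℚ) / 2, by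
    have h1 := intCast_mem_Zr r l3
    have h2 := half_mul_intCast_mem_Zr r (l1 * l2)
    have : (l3 : ℚ) + (r : ℚ) / 2 * ((l1 * l2 : ℤ) : ℚ) ∈ Zr r := add_mem h1 h2
    convert this using 1
    push_cast
    ring⟩

end GammaR

/-- The relations of the group `H_r`: generators `g₁,g₂,g₃` (indexed by `Fin 3`) and
relations `g₁g₂g₁⁻¹g₂⁻¹ = g₃^{r}`, `g₁g₃ = g₃g₁`, `g₂g₃ = g₃g₂`. -/
def hRels (r : ℤ) : Set (FreeGroup (Fin 3)) :=
  { FreeGroup.of 0 * FreeGroup.of 1 * (FreeGroup.of 0)⁻¹ * (FreeGroup.of 1)⁻¹ *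
      ((FreeGroup.of 2) ^ r)⁻¹,
    FreeGroup.of 0 * FreeGroup.of 2 * (FreeGroup.of 0)⁻¹ * (FreeGroup.of 2)⁻¹,
    FreeGroup.of 1 * FreeGroup.of 2 * (FreeGroup.of 1)⁻¹ * (FreeGroup.of 2)⁻¹ }

/-- The group `H_r`. -/
abbrev Hr (r : ℤ) := PresentedGroup (hRels r)

/-! Write elements of `Γ_r` as `((l₁, l₂), l₃ + (r/2) l₁ l₂)`. Under multiplication the
coordinate `l₃` is additive up to the integer `-r l₂ l₁'`, so the elements with `l₃ ∈ ℤ` form a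
subgroup. It contains the images of the generators, and each of its elements is
`μ(g₁^{l₁} g₂^{l₂} g₃^{l₃})`, so it is the image of `μ`. -/

namespace GammaR

variable {r : ℤ}

/-- In the coordinates of `elt`, the third coordinate `l₃` of `x`. -/
def shiftedY (x : GammaR r) : ℚ := x.y - (r : ℚ) / 2 * (x.zeta 0) * (x.zeta 1)

lemma shiftedY_mul (a b : GammaR r) :
    shiftedY (a * b) = shiftedY a + shiftedY b - ((r * a.zeta 1 * b.zeta 0 : ℤ) : ℚ) := by
  simp only [shiftedY, mul_y, mul_zeta, Pi.add_apply]
  push_cast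
  ring

lemma shiftedY_inv (a : GammaR r) :
    shiftedY a⁻¹ = -shiftedY a - ((r * a.zeta 0 * a.zeta 1 : ℤ) : ℚ) := by
  simp only [shiftedY, inv_y, inv_zeta, Pi.neg_apply]
  push_cast
  ring

@[simp] lemma elt_zeta_zero (a b c : ℤ) : (elt r a b c).zeta 0 = a := rfl
@[simp] lemma elt_zeta_one (a b c : ℤ) : (elt r a b c).zeta 1 = b := rfl
@[simp] lemma elt_y (a b c : ℤ) : (elt r a b c).y = c + a * b * r / 2 := rfl

@[simp] lemma shiftedY_elt (a b c : ℤ) : shiftedY (elt r a b c) = c := by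
  rw [shiftedY, elt_zeta_zero, elt_zeta_one, elt_y]
  ring

lemma ext_of_zeta_of_shiftedY {a b : GammaR r} (h0 : a.zeta 0 = b.zeta 0)
    (h1 : a.zeta 1 = b.zeta 1) (hy : shiftedY a = shiftedY b) : a = b := by
  ext i
  · fin_cases i <;> assumption
  · simpa [shiftedY, h0, h1] using hy

lemma eq_elt_of_shiftedY_eq {x : GammaR r} {n : ℤ} (h : shiftedY x = n) :
    x = elt r (x.zeta 0) (x.zeta 1) n :=
  ext_of_zeta_of_shiftedY rfl rfl (by rw [h, shiftedY_elt])

lemma elt_mul_elt (a b c a' b' c' : ℤ) :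
    elt r a b c * elt r a' b' c' = elt r (a + a') (b + b') (c + c' - r * b * a') :=
  ext_of_zeta_of_shiftedY rfl rfl (by rw [shiftedY_mul]; simp)

lemma zpow_zeta (x : GammaR r) (n : ℤ) : (x ^ n).zeta = n • x.zeta := by
  induction n using Int.induction_on with
  | zero => simp
  | succ k ih => rw [zpow_add_one, mul_zeta, ih, add_smul, one_smul]
  | pred k ih => rw [zpow_sub_one, mul_zeta, inv_zeta, ih, sub_smul, one_smul, sub_eq_add_neg]

/-- The cocycle term of `x ^ k * x` vanishes since `det(ζ, ζ) = 0`. -/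
lemma zpow_y (x : GammaR r) (n : ℤ) : (x ^ n).y = n * x.y := by
  induction n using Int.induction_on with
  | zero => simp
  | succ k ih =>
    rw [zpow_add_one, mul_y, ih, zpow_zeta]
    simp only [Pi.smul_apply, smul_eq_mul]
    push_cast
    ring
  | pred k ih =>
    rw [zpow_sub_one, mul_y, inv_y, inv_zeta, ih, zpow_zeta]
    simp only [Pi.smul_apply, Pi.neg_apply, smul_eq_mul]
    push_cast
    ring

lemma elt_zpow {a b : ℤ} (hab : a * b = 0) (c n : ℤ) :
    elt r a b c ^ n = elt r (n * a) (n * b) (n * c) := by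
  refine ext_of_zeta_of_shiftedY ?_ ?_ ?_
  · simp [zpow_zeta]
  · simp [zpow_zeta]
  · have hab' : (a : ℚ) * b = 0 := by exact_mod_cast hab
    simp only [shiftedY, zpow_y, zpow_zeta, Pi.smul_apply, smul_eq_mul, elt_zeta_zero,
      elt_zeta_one, elt_y]
    push_cast
    linear_combination ((n : ℚ) * r / 2 - n ^ 2 * r / 2) * hab'

def integralSubgroup (r : ℤ) : Subgroup (GammaR r) where
  carrier := {x | ∃ n : ℤ, shiftedY x = n}
  one_mem' := ⟨0, by simp [shiftedY]⟩
  mul_mem' := by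
    rintro a b ⟨m, hm⟩ ⟨n, hn⟩
    exact ⟨m + n - r * a.zeta 1 * b.zeta 0, by rw [shiftedY_mul, hm, hn]; push_cast; ring⟩
  inv_mem' := by
    rintro a ⟨n, hn⟩
    exact ⟨-n - r * a.zeta 0 * a.zeta 1, by rw [shiftedY_inv, hn]; push_cast; ring⟩

lemma mem_integralSubgroup {x : GammaR r} :
    x ∈ integralSubgroup r ↔ ∃ n : ℤ, shiftedY x = n := Iff.rfl

lemma integralSubgroup_eq_closure :
    integralSubgroup r =
      Subgroup.closure (Set.range ![elt r 1 0 0, elt r 0 1 0, elt r 0 0 1]) := by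
  apply le_antisymm
  · rintro x ⟨n, hn⟩
    have hx : x = elt r 1 0 0 ^ x.zeta 0 * elt r 0 1 0 ^ x.zeta 1 * elt r 0 0 1 ^ n := by
      rw [eq_elt_of_shiftedY_eq hn]
      simp [elt_zpow, elt_mul_elt]
    rw [hx]
    refine mul_mem (mul_mem ?_ ?_) ?_ <;> refine zpow_mem (Subgroup.subset_closure ?_) _
    exacts [⟨0, rfl⟩, ⟨1, rfl⟩, ⟨2, rfl⟩]
  · rw [Subgroup.closure_le, Set.range_subset_iff]
    intro i
    fin_cases i <;> exact ⟨_, shiftedY_elt _ _ _⟩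

end GammaR

theorem stmt_6_general (r : ℤ) (μ : Hr r →* GammaR r)
    (h1 : μ (PresentedGroup.of 0) = GammaR.elt r 1 0 0)
    (h2 : μ (PresentedGroup.of 1) = GammaR.elt r 0 1 0)
    (h3 : μ (PresentedGroup.of 2) = GammaR.elt r 0 0 1) :
    ∀ x : GammaR r,
      x ∈ μ.range ↔ ∃ n : ℤ, x.y - (r : ℚ) / 2 * (x.zeta 0) * (x.zeta 1) = (n : ℚ) := by
  have hgen : μ ∘ PresentedGroup.of =
      ![GammaR.elt r 1 0 0, GammaR.elt r 0 1 0, GammaR.elt r 0 0 1] := by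
    funext i
    fin_cases i <;> assumption
  have hrange : μ.range = GammaR.integralSubgroup r := by
    rw [MonoidHom.range_eq_map, ← PresentedGroup.closure_range_of, MonoidHom.map_closure,
      ← Set.range_comp, hgen, GammaR.integralSubgroup_eq_closure]
  intro x
  rw [hrange]
  exact GammaR.mem_integralSubgroup

/-- Let `μ : H_r → Γ_r` be the injective homomorphism with `μ(g₁) = ((1,0),0)`,
`μ(g₂) = ((0,1),0)`, `μ(g₃) = ((0,0),1)`. An element `((l₁,l₂),λ)` of `Γ_r` lies in the
image of `μ` iff `λ − (r/2)l₁l₂ ∈ ℤ`. -/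
theorem stmt_6 (r : ℤ) (hr : r ≠ 0) (μ : Hr r →* GammaR r)
    (hinj : Function.Injective μ)
    (h1 : μ (PresentedGroup.of 0) = GammaR.elt r 1 0 0)
    (h2 : μ (PresentedGroup.of 1) = GammaR.elt r 0 1 0)
    (h3 : μ (PresentedGroup.of 2) = GammaR.elt r 0 0 1) :
    ∀ x : GammaR r,
      x ∈ μ.range ↔ ∃ n : ℤ, x.y - (r : ℚ) / 2 * (x.zeta 0) * (x.zeta 1) = (n : ℚ) :=
  stmt_6_general r μ h1 h2 h3
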